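/- Let κ ≥ 0, α_x, α_t ∈ (0,1], and let p ∈ C^{α_x,α_t}([0,T]×Ω̄) with 1 < p⁻ ≤ p⁺ < ∞. Then there is a constant c > 0 such that for all (t,x), (s,y) ∈ [0,T]×Ω̄ and all η ∈ ℝ^{N×n} with η ≠ 0: |S(t,x,η) − S(s,y,η)| ≤ c (|t−s|^{α_t} + |x−y|^{α_x}) (1 + |ln(κ+|η|)|) ((κ+|η|)^{p(t,x)−2} + (κ+|η|)^{p(s,y)−2}) |η|. -/

import Mathlib

/-!
On the ray through `η` the map `S` is scalar: `S(t,x,η) = a ^ (p(t,x) - 2) • η` with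
`a = κ + |η| > 0`. Writing `a ^ b = exp (b log a)`, the elementary estimate
`|eᵘ - eᵛ| ≤ |u - v| (eᵘ + eᵛ)` gives
`|a ^ b₁ - a ^ b₂| ≤ |b₁ - b₂| |log a| (a ^ b₁ + a ^ b₂)`, and the Hölder continuity of `p`
bounds `|b₁ - b₂|`.
-/

open Set

lemma abs_exp_sub_exp_le (u v : ℝ) :
    |Real.exp u - Real.exp v| ≤ |u - v| * (Real.exp u + Real.exp v) := by
  wlog hvu : v ≤ u with H
  · rw [abs_sub_comm, abs_sub_comm u, add_comm]
    exact H v u (le_of_not_ge hvu)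
  have hexp : Real.exp v ≤ Real.exp u := Real.exp_le_exp.2 hvu
  rw [abs_of_nonneg (sub_nonneg.2 hexp), abs_of_nonneg (sub_nonneg.2 hvu)]
  have hconv : Real.exp u * (v - u + 1) ≤ Real.exp v := by
    calc Real.exp u * (v - u + 1) ≤ Real.exp u * Real.exp (v - u) :=
          mul_le_mul_of_nonneg_left (Real.add_one_le_exp _) (Real.exp_pos u).le
      _ = Real.exp v := by rw [← Real.exp_add, add_sub_cancel]
  nlinarith [Real.exp_pos v]

lemma abs_rpow_sub_rpow_le {a : ℝ} (ha : 0 < a) (b₁ b₂ : ℝ) :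
    |a ^ b₁ - a ^ b₂| ≤ |b₁ - b₂| * |Real.log a| * (a ^ b₁ + a ^ b₂) := by
  simp only [Real.rpow_def_of_pos ha]
  calc |Real.exp (Real.log a * b₁) - Real.exp (Real.log a * b₂)|
      ≤ |Real.log a * b₁ - Real.log a * b₂| *
          (Real.exp (Real.log a * b₁) + Real.exp (Real.log a * b₂)) := abs_exp_sub_exp_le _ _
    _ = |b₁ - b₂| * |Real.log a| *
          (Real.exp (Real.log a * b₁) + Real.exp (Real.log a * b₂)) := by
      rw [← mul_sub, abs_mul, mul_comm |Real.log a|]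

lemma norm_rpow_smul_sub_rpow_smul_le {E : Type*} [SeminormedAddCommGroup E] [NormedSpace ℝ E]
    {a : ℝ} (ha : 0 < a) (b₁ b₂ : ℝ) (v : E) :
    ‖a ^ b₁ • v - a ^ b₂ • v‖ ≤ |b₁ - b₂| * |Real.log a| * (a ^ b₁ + a ^ b₂) * ‖v‖ := by
  rw [← sub_smul, norm_smul, Real.norm_eq_abs]
  exact mul_le_mul_of_nonneg_right (abs_rpow_sub_rpow_le ha b₁ b₂) (norm_nonneg v)

theorem stmt5 (N n : ℕ) (T : ℝ) (Ω : Set (EuclideanSpace ℝ (Fin n)))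
    (κ αx αt : ℝ) (hκ : 0 ≤ κ)
    (p : ℝ × EuclideanSpace ℝ (Fin n) → ℝ) (c₀ : ℝ) (hc₀ : 0 ≤ c₀)
    (hHolder : ∀ t ∈ Icc (0:ℝ) T, ∀ s ∈ Icc (0:ℝ) T, ∀ x ∈ closure Ω, ∀ y ∈ closure Ω,
      |p (t, x) - p (s, y)| ≤ c₀ * (|t - s| ^ αt + ‖x - y‖ ^ αx)) :
    ∃ c : ℝ, 0 < c ∧
      ∀ t ∈ Icc (0:ℝ) T, ∀ s ∈ Icc (0:ℝ) T, ∀ x ∈ closure Ω, ∀ y ∈ closure Ω,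
        ∀ η : EuclideanSpace ℝ (Fin N × Fin n), η ≠ 0 →
          ‖(κ + ‖η‖) ^ (p (t, x) - 2) • η - (κ + ‖η‖) ^ (p (s, y) - 2) • η‖ ≤
            c * (|t - s| ^ αt + ‖x - y‖ ^ αx) * (1 + |Real.log (κ + ‖η‖)|) *
              ((κ + ‖η‖) ^ (p (t, x) - 2) + (κ + ‖η‖) ^ (p (s, y) - 2)) * ‖η‖ := by
  refine ⟨c₀ + 1, by linarith, fun t ht s hs x hx y hy η hη => ?_⟩
  have ha : 0 < κ + ‖η‖ := add_pos_of_nonneg_of_pos hκ (norm_pos_iff.2 hη)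
  have hΔ : 0 ≤ |t - s| ^ αt + ‖x - y‖ ^ αx := by positivity
  have hexponent :
      |(p (t, x) - 2) - (p (s, y) - 2)| ≤ (c₀ + 1) * (|t - s| ^ αt + ‖x - y‖ ^ αx) := by
    rw [sub_sub_sub_cancel_right]
    nlinarith [hHolder t ht s hs x hx y hy]
  have hlog : |Real.log (κ + ‖η‖)| ≤ 1 + |Real.log (κ + ‖η‖)| :=
    le_add_of_nonneg_left zero_le_one
  calc _ ≤ _ := norm_rpow_smul_sub_rpow_smul_le ha _ _ η
    _ ≤ _ := by gcongr
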